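/- Let a > 0 and let r_c > 0 satisfy sinh²r_c = 1. On U = {(t,r,φ,z) ∈ ℝ⁴ : r > r_c} consider the Gödel metric g with nonzero components g_{00} = a², g_{02} = g_{20} = a²√2 sinh²r, g_{22} = a² sinh²r(sinh²r − 1), g_{11} = g_{33} = −a², the observer field v^μ = (0, 0, 1/(a sinh r √(sinh²r − 1)), 0) with covariant components v_μ = Σ_ν g_{μν}v^ν, and b defined by 1 + b = sinh²r(sinh²r − 1). Then the covariant dragged metric q̂_{μν} = g_{μν} − (b/(1+b)) v_μ v_ν has nonzero components q̂_{00} = a²(3 − sinh⁴r)/(sinh²r − 1)², q̂_{02} = q̂_{20} = a²√2/(sinh²r − 1), q̂_{22} = a², q̂_{11} = q̂_{33} = −a². -/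

import Mathlib

open scoped BigOperators

/-- The Gödel metric in cylindrical coordinates (t, r, φ, z) = (x⁰, x¹, x², x³). -/
noncomputable def gGodel (a : ℝ) (x : Fin 4 → ℝ) : Matrix (Fin 4) (Fin 4) ℝ :=
  !![a ^ 2, 0, a ^ 2 * Real.sqrt 2 * Real.sinh (x 1) ^ 2, 0;
     0, -a ^ 2, 0, 0;
     a ^ 2 * Real.sqrt 2 * Real.sinh (x 1) ^ 2, 0,
       a ^ 2 * Real.sinh (x 1) ^ 2 * (Real.sinh (x 1) ^ 2 - 1), 0;
     0, 0, 0, -a ^ 2]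

/-- The circular observer `v^μ = (0, 0, 1/(a sinh r √(sinh²r − 1)), 0)`. -/
noncomputable def vGodel (a : ℝ) (x : Fin 4 → ℝ) : Fin 4 → ℝ :=
  ![0, 0, (a * Real.sinh (x 1) * Real.sqrt (Real.sinh (x 1) ^ 2 - 1))⁻¹, 0]

/-- The dragged-metric coefficient: `b` with `1 + b = sinh²r(sinh²r − 1)`. -/
noncomputable def bGodel (x : Fin 4 → ℝ) : ℝ :=
  Real.sinh (x 1) ^ 2 * (Real.sinh (x 1) ^ 2 - 1) - 1

/-- The dragged Gödel metric. -/
noncomputable def qGodel (a : ℝ) (x : Fin 4 → ℝ) : Matrix (Fin 4) (Fin 4) ℝ :=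
  !![a ^ 2 * (3 - Real.sinh (x 1) ^ 4) / (Real.sinh (x 1) ^ 2 - 1) ^ 2, 0,
       a ^ 2 * Real.sqrt 2 / (Real.sinh (x 1) ^ 2 - 1), 0;
     0, -a ^ 2, 0, 0;
     a ^ 2 * Real.sqrt 2 / (Real.sinh (x 1) ^ 2 - 1), 0, a ^ 2, 0;
     0, 0, 0, -a ^ 2]

/-! Only `v^φ` is nonzero, so `v_μ = g_{μφ} v^φ` and `v_μ v_ν = g_{μφ} g_{νφ} / (a² (1 + b))`.
Hence `q̂` differs from `g` only in the `t`–`φ` block, where each entry is a rational function of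
`sinh² r`; the condition `r > r_c` means `sinh r > 1`, which keeps `√(sinh² r − 1)` real and all
denominators nonzero. -/

open Real Matrix

theorem one_lt_sinh_of_lt {rc r : ℝ} (hrc : 0 < rc) (hrc1 : sinh rc ^ 2 = 1) (h : rc < r) :
    1 < sinh r := by
  have hsinh_rc : sinh rc = 1 := by
    have := sinh_pos_iff.2 hrc
    nlinarith
  exact hsinh_rc ▸ sinh_lt_sinh.2 h

theorem vGodel_eq_single (a : ℝ) (x : Fin 4 → ℝ) :
    vGodel a x = Pi.single 2 (a * sinh (x 1) * √(sinh (x 1) ^ 2 - 1))⁻¹ := by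
  ext i; fin_cases i <;> simp [vGodel]

theorem sum_gGodel_mul_vGodel (a : ℝ) (x : Fin 4 → ℝ) (μ : Fin 4) :
    ∑ α, gGodel a x μ α * vGodel a x α
      = gGodel a x μ 2 * (a * sinh (x 1) * √(sinh (x 1) ^ 2 - 1))⁻¹ := by
  rw [vGodel_eq_single]
  exact dotProduct_single _ _ _

theorem lowered_vGodel_mul_lowered_vGodel {a : ℝ} {x : Fin 4 → ℝ} (hs : 1 < sinh (x 1))
    (μ ν : Fin 4) :
    (∑ α, gGodel a x μ α * vGodel a x α) * (∑ α, gGodel a x ν α * vGodel a x α)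
      = gGodel a x μ 2 * gGodel a x ν 2 / (a ^ 2 * (sinh (x 1) ^ 2 * (sinh (x 1) ^ 2 - 1))) := by
  have hw : √(sinh (x 1) ^ 2 - 1) ^ 2 = sinh (x 1) ^ 2 - 1 := sq_sqrt (by nlinarith)
  rw [sum_gGodel_mul_vGodel, sum_gGodel_mul_vGodel, mul_mul_mul_comm, ← sq, inv_pow, mul_pow,
    mul_pow, hw]
  ring

theorem godel_dragged_metric_general (a rc : ℝ) (hrc : 0 < rc)
    (hrc1 : Real.sinh rc ^ 2 = 1) :
    ∀ x : Fin 4 → ℝ, rc < x 1 →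
      ∀ μ ν : Fin 4,
        gGodel a x μ ν - (bGodel x / (1 + bGodel x)) *
            (∑ α, gGodel a x μ α * vGodel a x α) * (∑ α, gGodel a x ν α * vGodel a x α)
          = qGodel a x μ ν := by
  intro x hx μ ν
  have hs : 1 < sinh (x 1) := one_lt_sinh_of_lt hrc hrc1 hx
  have hs2 : sinh (x 1) ^ 2 - 1 ≠ 0 := by nlinarith
  have hsqrt2 : √2 ^ 2 = 2 := sq_sqrt zero_le_two
  rw [mul_assoc, lowered_vGodel_mul_lowered_vGodel hs]
  fin_cases μ <;> fin_cases ν <;> simp [gGodel, qGodel, bGodel] <;> field_simp <;>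
    simp -failIfUnchanged only [hsqrt2] <;> ring

/-- In the acausal region of Gödel space-time, the covariant dragged metric
`q̂_{μν} = g_{μν} − (b/(1+b)) v_μ v_ν` associated with the circular observer and
`1 + b = sinh²r(sinh²r−1)` has the stated components. -/
theorem godel_dragged_metric (a rc : ℝ) (ha : 0 < a) (hrc : 0 < rc)
    (hrc1 : Real.sinh rc ^ 2 = 1) :
    ∀ x : Fin 4 → ℝ, rc < x 1 →
      ∀ μ ν : Fin 4,
        gGodel a x μ ν - (bGodel x / (1 + bGodel x)) *
            (∑ α, gGodel a x μ α * vGodel a x α) * (∑ α, gGodel a x ν α * vGodel a x α)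
          = qGodel a x μ ν :=
  godel_dragged_metric_general a rc hrc hrc1
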